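/- arXiv:2503.14297 — 2 statements merged into one kernel-verified Lean document; each statement's English description precedes it below -/
import Mathlib

section
/- Let Γ be a real symmetric positive semidefinite n×n matrix and let Λ be a diagonal matrix with Λ(i,i) = c / (Σ_j |Γ(i,j)|) when Σ_j |Γ(i,j)| > 0, and Λ(i,i) = d > 0 otherwise, where 0 < c < 2. Then 2Λ − ΛΓΛ is positive definite. -/
/-!
Writing `y = Λx`, the quadratic form of `2Λ - ΛΓΛ` is `2 ∑ λᵢ xᵢ² - yᵀΓy`. For symmetric `Γ`,
`2 yᵢ Γᵢⱼ yⱼ ≤ |Γᵢⱼ| (yᵢ² + yⱼ²)` summed over `i, j` gives `yᵀΓy ≤ ∑ sᵢ yᵢ²` with `sᵢ = ∑ⱼ |Γᵢⱼ|`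
(the Gershgorin bound), so the form is at least `∑ λᵢ (2 - sᵢλᵢ) xᵢ²`. The choice of `Λ` makes
`sᵢλᵢ ≤ c < 2`.
-/

open Matrix

namespace Matrix

variable {n : Type*} [Fintype n]

theorem IsHermitian.dotProduct_mulVec_le_sum_abs_mul_sq {A : Matrix n n ℝ} (hA : A.IsHermitian)
    (x : n → ℝ) : x ⬝ᵥ A *ᵥ x ≤ ∑ i, (∑ j, |A i j|) * x i ^ 2 := by
  have hsymm (i j : n) : A j i = A i j := by simpa using hA.apply i j
  have hentry (i j : n) : 2 * (x i * (A i j * x j)) ≤ |A i j| * x i ^ 2 + |A i j| * x j ^ 2 := by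
    have h1 : x i * (A i j * x j) ≤ |A i j| * (|x i| * |x j|) :=
      calc _ ≤ |x i * (A i j * x j)| := le_abs_self _
        _ = _ := by simp only [abs_mul]; ring
    have h2 := mul_le_mul_of_nonneg_left (two_mul_le_add_sq |x i| |x j|) (abs_nonneg (A i j))
    rw [sq_abs, sq_abs] at h2
    linarith
  have hswap : ∑ i, ∑ j, |A i j| * x j ^ 2 = ∑ i, ∑ j, |A i j| * x i ^ 2 := by
    rw [Finset.sum_comm]; simp_rw [hsymm]
  have htwice : 2 * (x ⬝ᵥ A *ᵥ x) ≤ 2 * ∑ i, (∑ j, |A i j|) * x i ^ 2 := by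
    calc 2 * (x ⬝ᵥ A *ᵥ x) = ∑ i, ∑ j, 2 * (x i * (A i j * x j)) := by
          simp only [dotProduct, mulVec, Finset.mul_sum]
      _ ≤ ∑ i, ∑ j, (|A i j| * x i ^ 2 + |A i j| * x j ^ 2) :=
          Finset.sum_le_sum fun i _ => Finset.sum_le_sum fun j _ => hentry i j
      _ = 2 * ∑ i, (∑ j, |A i j|) * x i ^ 2 := by
          rw [Finset.sum_congr rfl fun i _ => Finset.sum_add_distrib, Finset.sum_add_distrib,
            hswap, ← two_mul]
          simp only [Finset.sum_mul]
  linarith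

theorem posDef_two_smul_diagonal_sub_diagonal_mul_mul_diagonal [DecidableEq n]
    {A : Matrix n n ℝ} (hA : A.IsHermitian) {l : n → ℝ} (hl : ∀ i, 0 < l i)
    (hlA : ∀ i, (∑ j, |A i j|) * l i < 2) :
    ((2 : ℝ) • diagonal l - diagonal l * A * diagonal l).PosDef := by
  have hD : (diagonal l).IsHermitian := isHermitian_diagonal l
  refine PosDef.of_dotProduct_mulVec_pos ?_ fun x hx => ?_
  · refine (hD.smul (IsSelfAdjoint.all (2 : ℝ))).sub ?_
    simpa [hD.eq] using isHermitian_conjTranspose_mul_mul (diagonal l) hA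
  · set y := diagonal l *ᵥ x
    have hquad : star x ⬝ᵥ ((2 : ℝ) • diagonal l - diagonal l * A * diagonal l) *ᵥ x
        = ∑ i, 2 * (l i * x i ^ 2) - y ⬝ᵥ A *ᵥ y := by
      have hxy (z : n → ℝ) : x ⬝ᵥ diagonal l *ᵥ z = y ⬝ᵥ z := by
        rw [dotProduct_mulVec]
        congr 1 with i
        simp [y, vecMul_diagonal, mulVec_diagonal, mul_comm]
      rw [sub_mulVec, dotProduct_sub, ← mulVec_mulVec, ← mulVec_mulVec, star_trivial,
        smul_mulVec, dotProduct_smul, hxy, hxy]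
      simp [y, dotProduct, mulVec_diagonal, Finset.mul_sum, sq, mul_assoc]
    have hy : y ⬝ᵥ A *ᵥ y ≤ ∑ i, (∑ j, |A i j|) * l i * (l i * x i ^ 2) := by
      convert hA.dotProduct_mulVec_le_sum_abs_mul_sq y using 2 with i
      simp only [y, mulVec_diagonal]
      ring
    obtain ⟨k, hk⟩ := Function.ne_iff.mp hx
    have hpos : 0 < ∑ i, (2 - (∑ j, |A i j|) * l i) * (l i * x i ^ 2) :=
      Finset.sum_pos'
        (fun i _ => mul_nonneg (sub_pos.2 (hlA i)).le (mul_nonneg (hl i).le (sq_nonneg _)))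
        ⟨k, Finset.mem_univ k, mul_pos (sub_pos.2 (hlA k)) (mul_pos (hl k) (sq_pos_of_ne_zero hk))⟩
    rw [hquad]
    simp only [sub_mul, Finset.sum_sub_distrib] at hpos
    linarith

end Matrix

theorem stmt2 {n : Type*} [Fintype n] [DecidableEq n]
    (Γ : Matrix n n ℝ) (hΓ : Γ.PosSemidef)
    (c d : ℝ) (hc0 : 0 < c) (hc2 : c < 2) (hd : 0 < d)
    (Λ : Matrix n n ℝ)
    (hΛ : Λ = Matrix.diagonal (fun i =>
      if 0 < ∑ j, |Γ i j| then c / ∑ j, |Γ i j| else d)) :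
    ((2:ℝ) • Λ - Λ * Γ * Λ).PosDef := by
  subst hΛ
  refine posDef_two_smul_diagonal_sub_diagonal_mul_mul_diagonal hΓ.isHermitian
    (fun i => ?_) (fun i => ?_)
  · split_ifs with h
    · exact div_pos hc0 h
    · exact hd
  · split_ifs with h
    · rwa [mul_div_cancel₀ _ h.ne']
    · have hzero : ∑ j, |Γ i j| = 0 :=
        le_antisymm (not_lt.1 h) (Finset.sum_nonneg fun j _ => abs_nonneg _)
      rw [hzero, zero_mul]
      exact two_pos
end

section
/- For a single-hidden-layer network: if M = I and Λ is diagonal positive definite with Λ⁻¹ ≻ (1/2) W₁W₁ᵀ, then for γ = σ_max(W₂(2Λ − ΛW₁W₁ᵀΛ)⁻¹W₂ᵀ), the 3×3 block matrix [[I, −W₁ᵀΛ, 0],[−ΛW₁, 2Λ, −W₂ᵀ],[0, −W₂, γI]] is positive semidefinite. -/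
/-!
Write `K = 2Λ - ΛW₁W₁ᵀΛ = Λ (2(Λ⁻¹ - ½W₁W₁ᵀ)) Λ`; it is positive definite, being congruent to a
positive definite matrix (`Λ` itself is positive definite since `Λ⁻¹ ≻ ½W₁W₁ᵀ ⪰ 0`). A Schur
complement with respect to the identity block turns the 3 × 3 block matrix into
`[[K, -W₂ᵀ], [-W₂, γI]]`, and a second one, with respect to `K`, into `γI - W₂K⁻¹W₂ᵀ`. That matrix
is positive semidefinite because `γ` bounds every eigenvalue of `W₂K⁻¹W₂ᵀ`.
-/

open Matrix

noncomputable def sigmaMax {n : Type*} [Fintype n] [DecidableEq n]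
    {A : Matrix n n ℝ} (hA : A.IsHermitian) : ℝ :=
  ⨆ i, |hA.eigenvalues i|

namespace Matrix

variable {m n p : Type*} [Fintype m] [Fintype n] [Fintype p]

section Schur

variable [DecidableEq m] {𝕜 : Type*} [Field 𝕜] [PartialOrder 𝕜] [StarRing 𝕜] [StarOrderedRing 𝕜]

lemma PosDef.posSemidef_fromBlocks_fromBlocks_iff {A : Matrix m m 𝕜} (hA : A.PosDef)
    (B : Matrix m n 𝕜) (D : Matrix n n 𝕜) (E : Matrix n p 𝕜) (F : Matrix p p 𝕜) :
    (fromBlocks (fromBlocks A B Bᴴ D) (fromRows 0 E) (fromCols 0 Eᴴ) F).PosSemidef ↔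
      (fromBlocks (D - Bᴴ * A⁻¹ * B) E Eᴴ F).PosSemidef := by
  let := hA.isUnit.invertible
  have hassoc : (fromBlocks (fromBlocks A B Bᴴ D) (fromRows 0 E) (fromCols 0 Eᴴ) F).submatrix
      (Equiv.sumAssoc m n p).symm (Equiv.sumAssoc m n p).symm =
      fromBlocks A (fromCols B 0) (fromCols B 0)ᴴ (fromBlocks D E Eᴴ F) := by
    ext (i | i | i) (j | j | j) <;> simp
  have hschur : fromBlocks D E Eᴴ F - (fromCols B 0)ᴴ * A⁻¹ * fromCols B 0 =
      fromBlocks (D - Bᴴ * A⁻¹ * B) E Eᴴ F := by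
    ext (i | i) (j | j) <;> simp [Matrix.mul_apply]
  rw [← posSemidef_submatrix_equiv (Equiv.sumAssoc m n p).symm, hassoc, hA.fromBlocks₁₁, hschur]

end Schur

variable [DecidableEq n]

lemma PosDef.of_inv_sub_smul_mul_transpose {Λ : Matrix n n ℝ} (W : Matrix n m ℝ) {c : ℝ}
    (hc : 0 ≤ c) (h : (Λ⁻¹ - c • (W * Wᵀ)).PosDef) : Λ.PosDef :=
  posDef_inv_iff.mp <| sub_add_cancel Λ⁻¹ (c • (W * Wᵀ)) ▸
    h.add_posSemidef ((posSemidef_self_mul_conjTranspose W).smul hc)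

lemma posDef_two_smul_sub_mul_mul_transpose_mul {Λ : Matrix n n ℝ} (W : Matrix n m ℝ)
    (h : (Λ⁻¹ - (1 / 2 : ℝ) • (W * Wᵀ)).PosDef) :
    ((2 : ℝ) • Λ - Λ * W * Wᵀ * Λ).PosDef := by
  have hΛ : Λ.PosDef := PosDef.of_inv_sub_smul_mul_transpose W (by norm_num) h
  have hcongr : (2 : ℝ) • Λ - Λ * W * Wᵀ * Λ =
      Λ * ((2 : ℝ) • (Λ⁻¹ - (1 / 2 : ℝ) • (W * Wᵀ))) * star Λ := by
    rw [star_eq_conjTranspose, hΛ.1.eq, Matrix.mul_smul, Matrix.smul_mul, Matrix.mul_sub,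
      Matrix.sub_mul, mul_nonsing_inv _ ((isUnit_iff_isUnit_det Λ).mp hΛ.isUnit), smul_sub]
    simp only [Matrix.one_mul, Matrix.mul_smul, Matrix.smul_mul, smul_smul, Matrix.mul_assoc]
    norm_num
  rw [hcongr, hΛ.isUnit.posDef_star_right_conjugate_iff]
  exact h.smul two_pos

lemma IsHermitian.eigenvalues_le_sigmaMax {H : Matrix n n ℝ} (hH : H.IsHermitian) (i : n) :
    hH.eigenvalues i ≤ sigmaMax hH :=
  (le_abs_self _).trans <|
    le_ciSup (f := fun i ↦ |hH.eigenvalues i|) (Set.finite_range _).bddAbove i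

lemma IsHermitian.posSemidef_smul_one_sub {H : Matrix n n ℝ} (hH : H.IsHermitian) {γ : ℝ}
    (hγ : ∀ i, hH.eigenvalues i ≤ γ) : (γ • (1 : Matrix n n ℝ) - H).PosSemidef := by
  refine posSemidef_iff_isHermitian_and_spectrum_nonneg.mpr
    ⟨(isHermitian_one.smul (IsSelfAdjoint.all γ)).sub hH, ?_⟩
  rw [← Algebra.algebraMap_eq_smul_one, ← spectrum.singleton_sub_eq,
    hH.spectrum_real_eq_range_eigenvalues]
  rintro _ ⟨_, rfl, _, ⟨i, rfl⟩, rfl⟩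
  exact sub_nonneg.mpr (hγ i)

end Matrix

theorem stmt11_general {n0 n1 n2 : ℕ}
    (W1 : Matrix (Fin n1) (Fin n0) ℝ) (W2 : Matrix (Fin n2) (Fin n1) ℝ)
    (Λ : Matrix (Fin n1) (Fin n1) ℝ)
    (hfeas : (Λ⁻¹ - (1/2 : ℝ) • (W1 * W1ᵀ)).PosDef)
    (hH : (W2 * ((2:ℝ) • Λ - Λ * W1 * W1ᵀ * Λ)⁻¹ * W2ᵀ).IsHermitian)
    (γ : ℝ) (hγ : γ = sigmaMax hH) :
    (Matrix.fromBlocks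
      (Matrix.fromBlocks (1 : Matrix (Fin n0) (Fin n0) ℝ) (-(W1ᵀ * Λ))
        (-(Λ * W1)) ((2:ℝ) • Λ))
      (Matrix.fromRows (0 : Matrix (Fin n0) (Fin n2) ℝ) (-W2ᵀ))
      (Matrix.fromCols (0 : Matrix (Fin n2) (Fin n0) ℝ) (-W2))
      (γ • (1 : Matrix (Fin n2) (Fin n2) ℝ))).PosSemidef := by
  have hΛt : Λᵀ = Λ := by
    rw [← conjTranspose_eq_transpose_of_trivial]
    exact (PosDef.of_inv_sub_smul_mul_transpose W1 (by norm_num) hfeas).1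
  have hK := posDef_two_smul_sub_mul_mul_transpose_mul W1 hfeas
  set K := (2 : ℝ) • Λ - Λ * W1 * W1ᵀ * Λ
  let := hK.isUnit.invertible
  have hW1 : -(Λ * W1) = (-(W1ᵀ * Λ))ᴴ := by simp [hΛt]
  have hW2 : -W2 = (-W2ᵀ)ᴴ := by simp
  have hschur :
      (2 : ℝ) • Λ - (-(W1ᵀ * Λ))ᴴ * (1 : Matrix (Fin n0) (Fin n0) ℝ)⁻¹ * -(W1ᵀ * Λ) = K := by
    simp [K, hΛt, Matrix.mul_assoc]
  have hquad : (-W2ᵀ)ᴴ * K⁻¹ * -W2ᵀ = W2 * K⁻¹ * W2ᵀ := by simp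
  rw [hW1, hW2, PosDef.one.posSemidef_fromBlocks_fromBlocks_iff, hschur, hK.fromBlocks₁₁,
    hquad, hγ]
  exact hH.posSemidef_smul_one_sub hH.eigenvalues_le_sigmaMax

theorem stmt11 {n0 n1 n2 : ℕ}
    (W1 : Matrix (Fin n1) (Fin n0) ℝ) (W2 : Matrix (Fin n2) (Fin n1) ℝ)
    (d : Fin n1 → ℝ) (hd : ∀ i, 0 < d i)
    (Λ : Matrix (Fin n1) (Fin n1) ℝ) (hΛ : Λ = Matrix.diagonal d)
    (hfeas : (Λ⁻¹ - (1/2 : ℝ) • (W1 * W1ᵀ)).PosDef)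
    (hH : (W2 * ((2:ℝ) • Λ - Λ * W1 * W1ᵀ * Λ)⁻¹ * W2ᵀ).IsHermitian)
    (γ : ℝ) (hγ : γ = sigmaMax hH) :
    (Matrix.fromBlocks
      (Matrix.fromBlocks (1 : Matrix (Fin n0) (Fin n0) ℝ) (-(W1ᵀ * Λ))
        (-(Λ * W1)) ((2:ℝ) • Λ))
      (Matrix.fromRows (0 : Matrix (Fin n0) (Fin n2) ℝ) (-W2ᵀ))
      (Matrix.fromCols (0 : Matrix (Fin n2) (Fin n0) ℝ) (-W2))
      (γ • (1 : Matrix (Fin n2) (Fin n2) ℝ))).PosSemidef :=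
  stmt11_general W1 W2 Λ hfeas hH γ hγ
end
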